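/- Let L, M, N ⊆ [m] with M a proper subset of [m] and with L, M, N not all empty, and let C = C(Δ_L, Δ_M^c, Δ_N). Then C is a binary linear code of length (2^m − 2^{|M|})·2^{|L|+|N|}, dimension m + |L| + |N|, and minimum distance (2^m − 2^{|M|})·2^{|L|+|N|−1}; its weight enumerator equals 1 + (2^{m+|L|+|N|} − 2^{m−|M|})·X^{(2^m − 2^{|M|})·2^{|L|+|N|−1}} + (2^{m−|M|} − 1)·X^{2^{m+|L|+|N|−1}}; and C is a Griesmer code, i.e., Σ_{i=0}^{k−1} ⌈d/2^i⌉ = n for these n, k, d. -/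

import Mathlib

open Finset Polynomial
open scoped Classical

/-- `V m` is the vector space `F₂^m`. -/
abbrev V (m : ℕ) := Fin m → ZMod 2

/-- Dot product `x·y = Σ_i x_i y_i` in `F₂`. -/
def dot {m : ℕ} (x y : V m) : ZMod 2 := ∑ i, x i * y i

/-- `Supp v = {i : v i ≠ 0}`. -/
def supp {m : ℕ} (v : V m) : Finset (Fin m) := Finset.univ.filter fun i => v i ≠ 0

/-- The simplicial complex `Δ_L = {v : Supp v ⊆ L}` generated by `L`. -/
def Δ {m : ℕ} (L : Finset (Fin m)) : Finset (V m) := Finset.univ.filter fun v => supp v ⊆ L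

/-- Hamming weight of a vector. -/
def wtv {ι : Type} [Fintype ι] (c : ι → ZMod 2) : ℕ :=
  (Finset.univ.filter fun i => c i ≠ 0).card

/-- The linear functional `x ↦ x·y`. -/
noncomputable def dotL {m : ℕ} (y : V m) : V m →ₗ[ZMod 2] ZMod 2 :=
  ∑ i, LinearMap.smulRight (LinearMap.proj i) (y i)

/-- The linear map `(α,β,γ) ↦ ((d₁,d₂,d₃) ↦ α·d₁ + (β+γ)·d₂ + β·d₃)` whose range is the
binary code `C(D₁,D₂,D₃)`. -/
noncomputable def codeMap {m : ℕ} (D₁ D₂ D₃ : Finset (V m)) :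
    (V m × V m × V m) →ₗ[ZMod 2]
      (({x // x ∈ D₁} × {x // x ∈ D₂} × {x // x ∈ D₃}) → ZMod 2) :=
  LinearMap.pi fun d =>
    (dotL d.1.1).comp (LinearMap.fst (ZMod 2) (V m) (V m × V m))
    + (dotL d.2.1.1).comp
        (((LinearMap.fst (ZMod 2) (V m) (V m)).comp (LinearMap.snd (ZMod 2) (V m) (V m × V m)))
          + ((LinearMap.snd (ZMod 2) (V m) (V m)).comp (LinearMap.snd (ZMod 2) (V m) (V m × V m))))
    + (dotL d.2.2.1).comp
        ((LinearMap.fst (ZMod 2) (V m) (V m)).comp (LinearMap.snd (ZMod 2) (V m) (V m × V m)))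

lemma codeMap_apply {m : ℕ} (D₁ D₂ D₃ : Finset (V m)) (α β γ : V m)
    (d : {x // x ∈ D₁} × {x // x ∈ D₂} × {x // x ∈ D₃}) :
    codeMap D₁ D₂ D₃ (α, β, γ) d = dot α d.1.1 + dot (β + γ) d.2.1.1 + dot β d.2.2.1 := by
  simp [codeMap, dotL, dot, LinearMap.smulRight, mul_comm]

/-!
Write `sgn` for the character `a ↦ (-1)^a` of `F₂`. For a codeword `c = c(α, β, γ)` of length `n`,
`∑_d sgn (c d) = n - 2 wt(c)`, and this character sum factors as
`S_{Δ_L}(α) · S_{Δ_M^c}(β + γ) · S_{Δ_N}(β)` with `S_D(y) = ∑_{d ∈ D} sgn (y · d)`.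
As `Δ_L` is a subspace with annihilator `Δ_{L^c}`, `S_{Δ_L}(y)` is `2^{|L|}` or `0`, and
`S_{Δ_M^c}(y) = 2^m [y = 0] - 2^{|M|} [y ∈ Δ_{M^c}]`. Hence `c` has weight `0`,
`2^{m+|L|+|N|-1}` or `n/2` according as `(α, β, β + γ)` lies in `Δ_{L^c} × Δ_{N^c} × {0}`,
in `Δ_{L^c} × Δ_{N^c} × (Δ_{M^c} \ {0})`, or in neither. Counting these two boxes gives the kernel,
hence the dimension, and the weight enumerator, since every codeword has `|ker|` preimages; unless
`L = M = N = ∅` they do not cover all parameters, so the weight `n/2` occurs.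
The Griesmer sum for `d = 2^a (2^t - 1)` and `k = a + t + 1` telescopes by halving `d`.
-/

def sgn : AddChar (ZMod 2) ℤ where
  toFun a := if a = 0 then 1 else -1
  map_zero_eq_one' := rfl
  map_add_eq_mul' := by decide

lemma sgn_apply (a : ZMod 2) : sgn a = if a = 0 then 1 else -1 := rfl

lemma sgn_sum {ι : Type*} (s : Finset ι) (f : ι → ZMod 2) :
    sgn (∑ i ∈ s, f i) = ∏ i ∈ s, sgn (f i) := by
  classical
  induction s using Finset.induction_on with
  | empty => simp
  | insert i s hi ih => rw [sum_insert hi, prod_insert hi, AddChar.map_add_eq_mul, ih]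

lemma sum_sgn_mul (a : ZMod 2) : ∑ s, sgn (a * s) = if a = 0 then 2 else 0 := by
  revert a; decide

lemma sum_sgn_eq_card_sub_two_mul_wtv {ι : Type} [Fintype ι] (c : ι → ZMod 2) :
    ∑ i, sgn (c i) = Fintype.card ι - 2 * (wtv c : ℤ) := by
  have h : ∀ i, sgn (c i) = 1 - 2 * if c i ≠ 0 then 1 else 0 := fun i => by
    by_cases hc : c i = 0 <;> simp [sgn_apply, hc]
  rw [sum_congr rfl fun i _ => h i, sum_sub_distrib, ← mul_sum, sum_boole]
  simp [wtv]

lemma wtv_eq_zero_iff {ι : Type} [Fintype ι] {c : ι → ZMod 2} : wtv c = 0 ↔ c = 0 := by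
  simp [wtv, funext_iff]

section Shear

variable {G : Type*} [AddCommGroup G] [Fintype G] [DecidableEq G]

/-- The image of the box `A × B × Y` under the shear `(a, b, y) ↦ (a, b, y - b)`. -/
def shearedBox (A B Y : Finset G) : Finset (G × G × G) :=
  univ.filter fun x => x.1 ∈ A ∧ x.2.1 ∈ B ∧ x.2.1 + x.2.2 ∈ Y

@[simp]
lemma mem_shearedBox {A B Y : Finset G} {x : G × G × G} :
    x ∈ shearedBox A B Y ↔ x.1 ∈ A ∧ x.2.1 ∈ B ∧ x.2.1 + x.2.2 ∈ Y := by
  simp [shearedBox]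

lemma card_shearedBox (A B Y : Finset G) : #(shearedBox A B Y) = #A * #B * #Y := by
  rw [mul_assoc, ← card_product, ← card_product]
  refine card_nbij' (fun x => (x.1, x.2.1, x.2.1 + x.2.2)) (fun x => (x.1, x.2.1, x.2.2 - x.2.1))
    ?_ ?_ ?_ ?_ <;> intro x <;> simp

end Shear

section

variable {m : ℕ}

lemma mem_Δ {L : Finset (Fin m)} {v : V m} : v ∈ Δ L ↔ ∀ i ∉ L, v i = 0 := by
  simp only [Δ, supp, mem_filter, mem_univ, true_and, subset_iff]
  exact forall_congr' fun i => not_imp_comm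

lemma mem_Δ_compl {L : Finset (Fin m)} {v : V m} : v ∈ Δ Lᶜ ↔ ∀ i ∈ L, v i = 0 := by
  simp [mem_Δ]

lemma zero_mem_Δ (L : Finset (Fin m)) : (0 : V m) ∈ Δ L := by
  simp [mem_Δ]

lemma card_lt_of_ssubset_univ {M : Finset (Fin m)} (hM : M ⊂ univ) : #M < m := by
  simpa using card_lt_card hM

lemma Δ_eq_piFinset (L : Finset (Fin m)) :
    Δ L = Fintype.piFinset fun i => if i ∈ L then univ else {0} := by
  ext v
  simp only [mem_Δ, Fintype.mem_piFinset]
  refine forall_congr' fun i => ?_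
  by_cases hi : i ∈ L <;> simp [hi]

lemma card_Δ (L : Finset (Fin m)) : #(Δ L) = 2 ^ #L := by
  rw [Δ_eq_piFinset, Fintype.card_piFinset]
  simp [apply_ite Finset.card, prod_ite_mem]

lemma card_compl_Δ (L : Finset (Fin m)) : #(Δ L)ᶜ = 2 ^ m - 2 ^ #L := by
  simp [card_compl, card_Δ]

/-- Orthogonality: `Δ L` is a subspace whose annihilator is `Δ Lᶜ`. -/
lemma sum_sgn_dot_Δ (L : Finset (Fin m)) (y : V m) :
    ∑ d ∈ Δ L, sgn (dot y d) = if y ∈ Δ Lᶜ then 2 ^ #L else 0 := by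
  have hfactor : ∀ i, ∑ s ∈ (if i ∈ L then univ else {0}), sgn (y i * s)
      = if i ∈ L then (if y i = 0 then 2 else 0) else 1 := fun i => by
    split_ifs <;> simp_all [sum_sgn_mul]
  rw [Δ_eq_piFinset L]
  simp_rw [dot, sgn_sum]
  rw [← prod_univ_sum (fun i => if i ∈ L then univ else {0}) fun i s => sgn (y i * s)]
  simp_rw [hfactor]
  rw [prod_ite_mem, univ_inter, prod_ite_zero, prod_const]
  simp only [mem_Δ_compl]
  congr

lemma sum_sgn_dot (y : V m) : ∑ d, sgn (dot y d) = if y = 0 then 2 ^ m else 0 := by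
  have hΔ : Δ (univ : Finset (Fin m)) = univ := by ext; simp [mem_Δ]
  simpa [hΔ, mem_Δ, funext_iff] using sum_sgn_dot_Δ univ y

lemma sum_sgn_dot_compl_Δ (M : Finset (Fin m)) (y : V m) :
    ∑ d ∈ (Δ M)ᶜ, sgn (dot y d)
      = (if y = 0 then 2 ^ m else 0) - if y ∈ Δ Mᶜ then 2 ^ #M else 0 := by
  rw [← sum_sgn_dot, ← sum_sgn_dot_Δ, ← sum_compl_add_sum (Δ M), add_sub_cancel_right]

lemma card_codeIndex (L M N : Finset (Fin m)) :
    Fintype.card ({x // x ∈ Δ L} × {x // x ∈ (Δ M)ᶜ} × {x // x ∈ Δ N})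
      = (2 ^ m - 2 ^ #M) * 2 ^ (#L + #N) := by
  simp only [Fintype.card_prod, Fintype.card_coe, card_Δ, card_compl_Δ, pow_add]
  ring

lemma sum_sgn_codeMap (D₁ D₂ D₃ : Finset (V m)) (α β γ : V m) :
    ∑ d, sgn (codeMap D₁ D₂ D₃ (α, β, γ) d)
      = (∑ d ∈ D₁, sgn (dot α d)) * (∑ d ∈ D₂, sgn (dot (β + γ) d)) * ∑ d ∈ D₃, sgn (dot β d) := by
  simp only [codeMap_apply, AddChar.map_add_eq_mul, Fintype.sum_prod_type, ← mul_sum, ← sum_mul]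
  rw [← sum_coe_sort D₁, ← sum_coe_sort D₂, ← sum_coe_sort D₃, mul_assoc]

abbrev kerTriples (L N : Finset (Fin m)) : Finset (V m × V m × V m) :=
  shearedBox (Δ Lᶜ) (Δ Nᶜ) {0}

abbrev heavyTriples (L M N : Finset (Fin m)) : Finset (V m × V m × V m) :=
  shearedBox (Δ Lᶜ) (Δ Nᶜ) ((Δ Mᶜ).erase 0)

lemma two_mul_wtv_codeMap (L M N : Finset (Fin m)) (x : V m × V m × V m) :
    2 * wtv (codeMap (Δ L) (Δ M)ᶜ (Δ N) x)
      = if x ∈ kerTriples L N then 0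
        else if x ∈ heavyTriples L M N then 2 ^ (m + #L + #N)
        else (2 ^ m - 2 ^ #M) * 2 ^ (#L + #N) := by
  obtain ⟨α, β, γ⟩ := x
  have hpow : 2 ^ #M ≤ 2 ^ m := Nat.pow_le_pow_right two_pos (card_le_univ M |>.trans_eq (by simp))
  have h := sum_sgn_eq_card_sub_two_mul_wtv (codeMap (Δ L) (Δ M)ᶜ (Δ N) (α, β, γ))
  rw [sum_sgn_codeMap, sum_sgn_dot_Δ, sum_sgn_dot_Δ, sum_sgn_dot_compl_Δ, card_codeIndex] at h
  push_cast [hpow] at h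
  zify [hpow]
  simp only [mem_shearedBox, mem_singleton, mem_erase]
  generalize β + γ = y at h ⊢
  by_cases hα : α ∈ Δ Lᶜ <;> by_cases hβ : β ∈ Δ Nᶜ <;> by_cases hy : y = 0 <;>
    by_cases hyM : y ∈ Δ Mᶜ <;>
    simp only [hα, hβ, hy, hyM, zero_mem_Δ, ne_eq, not_true_eq_false, not_false_eq_true,
      and_true, and_false, if_true, if_false, sub_zero, mul_zero, zero_mul] at h ⊢ <;>
    linear_combination h

lemma codeMap_eq_zero_iff (L N : Finset (Fin m)) {M : Finset (Fin m)} (hM : M ⊂ univ)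
    (x : V m × V m × V m) : codeMap (Δ L) (Δ M)ᶜ (Δ N) x = 0 ↔ x ∈ kerTriples L N := by
  have h := two_mul_wtv_codeMap L M N x
  have hn : 0 < (2 ^ m - 2 ^ #M) * 2 ^ (#L + #N) :=
    Nat.mul_pos (Nat.sub_pos_of_lt (Nat.pow_lt_pow_right one_lt_two (card_lt_of_ssubset_univ hM)))
      (by positivity)
  rw [← wtv_eq_zero_iff]
  split_ifs at h with hK hH
  · exact iff_of_true (by omega) hK
  · have : 0 < 2 ^ (m + #L + #N) := by positivity
    exact iff_of_false (by omega) hK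
  · exact iff_of_false (by omega) hK

lemma wtv_codeMap (L N : Finset (Fin m)) {M : Finset (Fin m)} (hM : M ⊂ univ)
    (x : V m × V m × V m) :
    wtv (codeMap (Δ L) (Δ M)ᶜ (Δ N) x)
      = if x ∈ kerTriples L N then 0
        else if x ∈ heavyTriples L M N then 2 ^ (m + #L + #N - 1)
        else (2 ^ m - 2 ^ #M) * 2 ^ (#L + #N) / 2 := by
  have h := two_mul_wtv_codeMap L M N x
  have hm := card_lt_of_ssubset_univ hM
  have hpow : 2 ^ (m + #L + #N) = 2 * 2 ^ (m + #L + #N - 1) := by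
    rw [← pow_succ']; congr 1; omega
  split_ifs at h ⊢ <;> omega

lemma card_kerTriples (L N : Finset (Fin m)) :
    #(kerTriples L N) = 2 ^ (m - #L) * 2 ^ (m - #N) := by
  simp [card_shearedBox, card_Δ, card_compl]

lemma card_heavyTriples (L M N : Finset (Fin m)) :
    #(heavyTriples L M N) = 2 ^ (m - #L) * 2 ^ (m - #N) * (2 ^ (m - #M) - 1) := by
  simp [card_shearedBox, card_Δ, card_compl, card_erase_of_mem (zero_mem_Δ _)]

lemma finrank_range_codeMap (L N : Finset (Fin m)) {M : Finset (Fin m)} (hM : M ⊂ univ) :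
    Module.finrank (ZMod 2) (LinearMap.range (codeMap (Δ L) (Δ M)ᶜ (Δ N)))
      = m + #L + #N := by
  set f := codeMap (Δ L) (Δ M)ᶜ (Δ N)
  have hker : Module.finrank (ZMod 2) (LinearMap.ker f) = (m - #L) + (m - #N) := by
    have h := Module.natCard_eq_pow_finrank (K := ZMod 2) (V := LinearMap.ker f)
    rw [Nat.card_zmod] at h
    refine Nat.pow_right_injective le_rfl (?_ : 2 ^ _ = 2 ^ _)
    rw [← h, pow_add, ← card_kerTriples, ← Nat.card_eq_finsetCard]
    exact Nat.card_congr <| Equiv.subtypeEquivRight fun x =>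
      LinearMap.mem_ker.trans (codeMap_eq_zero_iff L N hM x)
  have hL := card_le_univ L
  have hN := card_le_univ N
  simp only [Fintype.card_fin] at hL hN
  have := LinearMap.finrank_range_add_finrank_ker f
  simp only [Module.finrank_prod, Module.finrank_fin_fun] at this
  omega

lemma card_ker_nsmul_sum_range {R E F A : Type*} [Ring R] [AddCommGroup E] [Module R E]
    [Fintype E] [AddCommGroup F] [Module R F] [Fintype F] [DecidableEq F] [AddCommMonoid A]
    (f : E →ₗ[R] F) (g : F → A) :
    #{x | f x = 0} • ∑ c ∈ univ.filter (· ∈ LinearMap.range f), g c = ∑ x, g (f x) := by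
  have himage : univ.filter (· ∈ LinearMap.range f) = univ.image f := by
    ext c; simp [LinearMap.mem_range]
  rw [Finset.sum_comp g f, himage, smul_sum]
  refine sum_congr rfl fun c hc => ?_
  rw [AddMonoidHom.card_fiber_eq_of_mem_range f ⟨0, map_zero f⟩ (by simpa using hc)]

lemma disjoint_kerTriples_heavyTriples (L M N : Finset (Fin m)) :
    Disjoint (kerTriples L N) (heavyTriples L M N) := by
  simp +contextual [disjoint_left]

lemma card_triples (L N : Finset (Fin m)) :
    Fintype.card (V m × V m × V m) = 2 ^ (m - #L) * 2 ^ (m - #N) * 2 ^ (m + #L + #N) := by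
  have hL := card_le_univ L
  have hN := card_le_univ N
  simp only [Fintype.card_fin] at hL hN
  simp only [Fintype.card_prod, Fintype.card_fun, ZMod.card, Fintype.card_fin, ← pow_add]
  congr 1
  omega

lemma sum_X_pow_wtv_codeMap (L N : Finset (Fin m)) {M : Finset (Fin m)} (hM : M ⊂ univ) :
    ∑ x, (X : ℤ[X]) ^ wtv (codeMap (Δ L) (Δ M)ᶜ (Δ N) x)
      = 2 ^ (m - #L) * 2 ^ (m - #N)
        * (2 ^ (m + #L + #N) * X ^ ((2 ^ m - 2 ^ #M) * 2 ^ (#L + #N) / 2)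
          + (1 - X ^ ((2 ^ m - 2 ^ #M) * 2 ^ (#L + #N) / 2))
          + (2 ^ (m - #M) - 1) * (X ^ (2 ^ (m + #L + #N - 1))
            - X ^ ((2 ^ m - 2 ^ #M) * 2 ^ (#L + #N) / 2))) := by
  set d := (2 ^ m - 2 ^ #M) * 2 ^ (#L + #N) / 2
  set e := 2 ^ (m + #L + #N - 1)
  have hpt : ∀ x, (X : ℤ[X]) ^ wtv (codeMap (Δ L) (Δ M)ᶜ (Δ N) x)
      = X ^ d + (if x ∈ kerTriples L N then 1 - X ^ d else 0)
        + (if x ∈ heavyTriples L M N then X ^ e - X ^ d else 0) := fun x => by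
    have hdisj := @disjoint_left.1 (disjoint_kerTriples_heavyTriples L M N) x
    rw [wtv_codeMap L N hM]
    by_cases hK : x ∈ kerTriples L N
    · simp only [hK, hdisj hK, if_true, if_false]
      ring
    · by_cases hH : x ∈ heavyTriples L M N <;> simp only [hK, hH, if_true, if_false] <;> ring
  simp only [hpt, sum_add_distrib, sum_ite_mem, univ_inter, sum_const, card_univ, card_triples L N,
    card_kerTriples, card_heavyTriples, nsmul_eq_mul]
  push_cast [Nat.one_le_two_pow]
  ring

lemma card_filter_codeMap_eq_zero (L N : Finset (Fin m)) {M : Finset (Fin m)} (hM : M ⊂ univ) :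
    #{x | codeMap (Δ L) (Δ M)ᶜ (Δ N) x = 0} = 2 ^ (m - #L) * 2 ^ (m - #N) := by
  rw [← card_kerTriples]
  congr 1
  ext x
  simp [codeMap_eq_zero_iff L N hM]

lemma sum_range_X_pow_wtv_codeMap (L N : Finset (Fin m)) {M : Finset (Fin m)} (hM : M ⊂ univ) :
    ∑ c ∈ univ.filter (fun c => c ∈ LinearMap.range (codeMap (Δ L) (Δ M)ᶜ (Δ N))),
        (X : ℤ[X]) ^ wtv c
      = 1 + C ((2 : ℤ) ^ (m + #L + #N) - 2 ^ (m - #M)) * X ^ ((2 ^ m - 2 ^ #M) * 2 ^ (#L + #N) / 2)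
        + C ((2 : ℤ) ^ (m - #M) - 1) * X ^ (2 ^ (m + #L + #N - 1)) := by
  have h := card_ker_nsmul_sum_range (codeMap (Δ L) (Δ M)ᶜ (Δ N)) fun c => (X : ℤ[X]) ^ wtv c
  rw [sum_X_pow_wtv_codeMap L N hM, card_filter_codeMap_eq_zero L N hM] at h
  refine smul_right_injective ℤ[X] (r := 2 ^ (m - #L) * 2 ^ (m - #N)) (by positivity) ?_
  simp only [h, nsmul_eq_mul, map_sub, map_pow, map_one, C_ofNat]
  push_cast
  ring

lemma card_kerTriples_add_card_heavyTriples (L M N : Finset (Fin m)) :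
    #(kerTriples L N) + #(heavyTriples L M N) = 2 ^ (m - #L) * 2 ^ (m - #N) * 2 ^ (m - #M) := by
  rw [card_kerTriples, card_heavyTriples, Nat.mul_sub_one,
    ← Nat.add_sub_assoc (Nat.le_mul_of_pos_right _ (by positivity)), Nat.add_sub_cancel_left]

lemma exists_notMem_kerTriples_notMem_heavyTriples (L N : Finset (Fin m)) {M : Finset (Fin m)}
    (hM : M ⊂ univ) (hLMN : 0 < #L + #M + #N) :
    ∃ x, x ∉ kerTriples L N ∧ x ∉ heavyTriples L M N := by
  have hm := card_lt_of_ssubset_univ hM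
  have hlt : #(kerTriples L N ∪ heavyTriples L M N) < #(univ : Finset (V m × V m × V m)) :=
    calc _ ≤ _ := card_union_le _ _
      _ = 2 ^ (m - #L) * 2 ^ (m - #N) * 2 ^ (m - #M) := card_kerTriples_add_card_heavyTriples L M N
      _ < 2 ^ (m - #L) * 2 ^ (m - #N) * 2 ^ (m + #L + #N) :=
        Nat.mul_lt_mul_of_pos_left (Nat.pow_lt_pow_right one_lt_two (by omega)) (by positivity)
      _ = _ := (card_triples L N).symm
  obtain ⟨x, -, hx⟩ := exists_mem_notMem_of_card_lt_card hlt
  exact ⟨x, not_or.1 (mt mem_union.2 hx)⟩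

lemma isLeast_wtv_codeMap (L N : Finset (Fin m)) {M : Finset (Fin m)} (hM : M ⊂ univ)
    (hLMN : 0 < #L + #M + #N) :
    IsLeast {w : ℕ | ∃ c ∈ LinearMap.range (codeMap (Δ L) (Δ M)ᶜ (Δ N)), c ≠ 0 ∧ wtv c = w}
      ((2 ^ m - 2 ^ #M) * 2 ^ (#L + #N) / 2) := by
  have hm := card_lt_of_ssubset_univ hM
  constructor
  · obtain ⟨x, hK, hH⟩ := exists_notMem_kerTriples_notMem_heavyTriples L N hM hLMN
    refine ⟨_, ⟨x, rfl⟩, (codeMap_eq_zero_iff L N hM x).not.2 hK, ?_⟩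
    rw [wtv_codeMap L N hM, if_neg hK, if_neg hH]
  · rintro w ⟨_, ⟨x, rfl⟩, hx, rfl⟩
    rw [wtv_codeMap L N hM, if_neg ((codeMap_eq_zero_iff L N hM x).not.1 hx)]
    split_ifs
    · apply Nat.div_le_of_le_mul
      calc _ ≤ 2 ^ m * 2 ^ (#L + #N) := Nat.mul_le_mul_right _ (Nat.sub_le _ _)
        _ = 2 * 2 ^ (m + #L + #N - 1) := by rw [← pow_add, ← pow_succ']; congr 1; omega
    · exact le_rfl

lemma ceil_two_pow_sub_one_div_two_pow {i t : ℕ} (hi : i < t) :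
    ⌈((2 : ℚ) ^ t - 1) / 2 ^ (i + 1)⌉ = 2 ^ (t - 1 - i) := by
  have hsplit : (2 : ℚ) ^ t = 2 ^ (t - 1 - i) * 2 ^ (i + 1) := by
    rw [← pow_add]; congr 1; omega
  have hq : (1 : ℚ) < 2 ^ (i + 1) := one_lt_pow₀ one_lt_two (by omega)
  rw [Int.ceil_eq_iff, hsplit, sub_div, mul_div_cancel_right₀ _ (by positivity)]
  push_cast
  constructor
  · linarith [(div_lt_one (by positivity)).2 hq]
  · linarith [div_nonneg zero_le_one (by positivity : (0 : ℚ) ≤ 2 ^ (i + 1))]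

lemma ceil_two_pow_mul_two_pow_sub_one (a t : ℕ) :
    ⌈(2 ^ a * (2 ^ t - 1) : ℚ)⌉ = 2 ^ a * (2 ^ t - 1) := by
  exact_mod_cast Int.ceil_intCast (2 ^ a * (2 ^ t - 1) : ℤ)

lemma sum_range_ceil_div_two_pow (a t : ℕ) :
    ∑ i ∈ range (a + t + 1), ⌈(2 ^ a * (2 ^ t - 1) : ℚ) / 2 ^ i⌉ = 2 ^ (a + 1) * (2 ^ t - 1) := by
  induction a with
  | zero =>
    have hgeom : ∑ i ∈ range t, (2 : ℤ) ^ (t - 1 - i) = 2 ^ t - 1 := by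
      rw [sum_range_reflect (2 ^ ·) t, ← mul_one (∑ i ∈ range t, _), ← geom_sum_mul]
      norm_num
    have hlast : ⌈(2 : ℚ) ^ t - 1⌉ = 2 ^ t - 1 := by
      simpa using ceil_two_pow_mul_two_pow_sub_one 0 t
    rw [zero_add, sum_range_succ']
    simp only [pow_zero, one_mul, div_one, hlast]
    rw [sum_congr rfl fun i hi => ceil_two_pow_sub_one_div_two_pow (mem_range.1 hi), hgeom]
    ring
  | succ a ih =>
    have hterm : ∀ i, (2 : ℚ) ^ (a + 1) * (2 ^ t - 1) / 2 ^ (i + 1) = 2 ^ a * (2 ^ t - 1) / 2 ^ i :=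
      fun i => by rw [pow_succ, pow_succ, mul_right_comm, mul_div_mul_right _ _ two_ne_zero]
    rw [show a + 1 + t + 1 = a + t + 1 + 1 by omega, sum_range_succ', pow_zero, div_one,
      ceil_two_pow_mul_two_pow_sub_one]
    simp only [hterm, ih]
    ring

lemma sum_range_ceil_half_length_div_two_pow (L N : Finset (Fin m)) {M : Finset (Fin m)}
    (hM : M ⊂ univ) (hLMN : 0 < #L + #M + #N) :
    ∑ i ∈ range (m + #L + #N), ⌈(((2 ^ m - 2 ^ #M) * 2 ^ (#L + #N) / 2 : ℚ)) / 2 ^ i⌉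
      = ((2 ^ m - 2 ^ #M) * 2 ^ (#L + #N) : ℤ) := by
  obtain ⟨a, ha⟩ : ∃ a, #L + #N + #M = a + 1 := ⟨_, (Nat.succ_pred_eq_of_pos (by omega)).symm⟩
  obtain ⟨t, ht⟩ : ∃ t, m = #M + t := ⟨m - #M, by have := card_lt_of_ssubset_univ hM; omega⟩
  have key : (2 : ℤ) ^ (#L + #N) * 2 ^ #M = 2 ^ a * 2 := by rw [← pow_add, ha, pow_succ]
  have hm : (2 : ℤ) ^ m = 2 ^ #M * 2 ^ t := by rw [← pow_add, ← ht]
  have hd : ((2 : ℚ) ^ m - 2 ^ #M) * 2 ^ (#L + #N) / 2 = 2 ^ a * (2 ^ t - 1) := by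
    rw [div_eq_iff two_ne_zero]
    exact_mod_cast (by linear_combination 2 ^ (#L + #N) * hm + (2 ^ t - 1) * key :
      ((2 : ℤ) ^ m - 2 ^ #M) * 2 ^ (#L + #N) = 2 ^ a * (2 ^ t - 1) * 2)
  rw [show m + #L + #N = a + t + 1 by omega]
  simp only [hd]
  rw [sum_range_ceil_div_two_pow]
  linear_combination (1 - (2 : ℤ) ^ t) * key - 2 ^ (#L + #N) * hm

end

theorem stmt7_general (m : ℕ) (L M N : Finset (Fin m))
    (hP : M ⊂ Finset.univ) (hne : L ≠ ∅ ∨ M ≠ ∅ ∨ N ≠ ∅) :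
    (Fintype.card ({x // x ∈ (Δ L)} × {x // x ∈ (Δ M)ᶜ} × {x // x ∈ (Δ N)}) = (2 ^ m - 2 ^ M.card) * 2 ^ (L.card + N.card)) ∧
    (Module.finrank (ZMod 2) ↥(LinearMap.range (codeMap (Δ L) (Δ M)ᶜ (Δ N))) = m + L.card + N.card) ∧
    IsLeast {w : ℕ | ∃ c ∈ LinearMap.range (codeMap (Δ L) (Δ M)ᶜ (Δ N)), c ≠ 0 ∧ wtv c = w}
      (((2 ^ m - 2 ^ M.card) * 2 ^ (L.card + N.card)) / 2) ∧
    ((∑ c ∈ Finset.univ.filter (fun c => c ∈ LinearMap.range (codeMap (Δ L) (Δ M)ᶜ (Δ N))),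
        (X : ℤ[X]) ^ wtv c)
      = 1 + Polynomial.C ((2 : ℤ) ^ (m + L.card + N.card) - 2 ^ (m - M.card)) * X ^ (((2 ^ m - 2 ^ M.card) * 2 ^ (L.card + N.card)) / 2)
          + Polynomial.C ((2 : ℤ) ^ (m - M.card) - 1) * X ^ (2 ^ (m + L.card + N.card - 1))) ∧
    (∑ i ∈ Finset.range (m + L.card + N.card), ⌈((((2 ^ m - 2 ^ M.card) * 2 ^ (L.card + N.card)) / 2 : ℚ)) / 2 ^ i⌉ = ((2 ^ m - 2 ^ M.card) * 2 ^ (L.card + N.card) : ℤ)) := by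
  have hLMN : 0 < #L + #M + #N := by
    rcases hne with h | h | h <;> have := card_pos.2 (nonempty_iff_ne_empty.2 h) <;> omega
  exact ⟨card_codeIndex L M N, finrank_range_codeMap L N hP, isLeast_wtv_codeMap L N hP hLMN,
    sum_range_X_pow_wtv_codeMap L N hP, sum_range_ceil_half_length_div_two_pow L N hP hLMN⟩

/-- Theorem 4.1(3): the code `C((Δ L), (Δ M)ᶜ, (Δ N))` is a two-weight
binary `[(2^m − 2^{|M|})·2^{|L|}+|N|}, m+|L|+|N|]` Griesmer code with the stated
weight distribution. -/
theorem stmt7 (m : ℕ) (hm : 1 ≤ m) (L M N : Finset (Fin m))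
    (hP : M ⊂ Finset.univ) (hne : L ≠ ∅ ∨ M ≠ ∅ ∨ N ≠ ∅) :
    (Fintype.card ({x // x ∈ (Δ L)} × {x // x ∈ (Δ M)ᶜ} × {x // x ∈ (Δ N)}) = (2 ^ m - 2 ^ M.card) * 2 ^ (L.card + N.card)) ∧
    (Module.finrank (ZMod 2) ↥(LinearMap.range (codeMap (Δ L) (Δ M)ᶜ (Δ N))) = m + L.card + N.card) ∧
    IsLeast {w : ℕ | ∃ c ∈ LinearMap.range (codeMap (Δ L) (Δ M)ᶜ (Δ N)), c ≠ 0 ∧ wtv c = w}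
      (((2 ^ m - 2 ^ M.card) * 2 ^ (L.card + N.card)) / 2) ∧
    ((∑ c ∈ Finset.univ.filter (fun c => c ∈ LinearMap.range (codeMap (Δ L) (Δ M)ᶜ (Δ N))),
        (X : ℤ[X]) ^ wtv c)
      = 1 + Polynomial.C ((2 : ℤ) ^ (m + L.card + N.card) - 2 ^ (m - M.card)) * X ^ (((2 ^ m - 2 ^ M.card) * 2 ^ (L.card + N.card)) / 2)
          + Polynomial.C ((2 : ℤ) ^ (m - M.card) - 1) * X ^ (2 ^ (m + L.card + N.card - 1))) ∧
    (∑ i ∈ Finset.range (m + L.card + N.card), ⌈((((2 ^ m - 2 ^ M.card) * 2 ^ (L.card + N.card)) / 2 : ℚ)) / 2 ^ i⌉ = ((2 ^ m - 2 ^ M.card) * 2 ^ (L.card + N.card) : ℤ)) :=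
  stmt7_general m L M N hP hne
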